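/- If X is a Hausdorff Baire space with a rank 2-diagonal, then |X| ≤ wL(X)^ω. -/
import Mathlib


open Set Topology

universe u

namespace DiagonalPaper

/-- The star of a set `A` with respect to a family `𝒰`:
the union of all members of `𝒰` meeting `A`. -/
def st {X : Type u} (A : Set X) (𝒰 : Set (Set X)) : Set X :=
  ⋃₀ {U | U ∈ 𝒰 ∧ (U ∩ A).Nonempty}

/-- Iterated star `Stⁿ(A, 𝒰)`. -/
def stn {X : Type u} (n : ℕ) (A : Set X) (𝒰 : Set (Set X)) : Set X :=
  (fun B => st B 𝒰)^[n] A

/-- `𝒰` is an open cover of the space `X`. -/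
def IsOpenCover {X : Type u} [TopologicalSpace X] (𝒰 : Set (Set X)) : Prop :=
  (∀ U ∈ 𝒰, IsOpen U) ∧ ⋃₀ 𝒰 = Set.univ

/-- The weak Lindelöf number of `X` (by convention at least `ℵ₀`): the least `κ` such that
every open cover has a subfamily of size at most `κ` with dense union. -/
noncomputable def weakLindelof (X : Type u) [TopologicalSpace X] : Cardinal.{u} :=
  Cardinal.aleph0 ⊔ sInf {κ | ∀ 𝒰 : Set (Set X), IsOpenCover 𝒰 →
    ∃ 𝒱 ⊆ 𝒰, Cardinal.mk ↥𝒱 ≤ κ ∧ Dense (⋃₀ 𝒱)}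

/-- `X` has a rank `n`-diagonal: a sequence `{𝒰_k : k < ω}` of open covers such that
for all `x ≠ y` there is `k` with `y ∉ Stⁿ(x, 𝒰_k)`. -/
def HasRankNDiagonal (X : Type u) [TopologicalSpace X] (n : ℕ) : Prop :=
  ∃ 𝒰 : ℕ → Set (Set X), (∀ k, IsOpenCover (𝒰 k)) ∧
    ∀ x y : X, x ≠ y → ∃ k, y ∉ stn n {x} (𝒰 k)

/-- `X` has a strong rank `n`-diagonal: a sequence `{𝒰_k : k < ω}` of open covers such that
for all `x ≠ y` there is `k` with `y ∉ cl(Stⁿ(x, 𝒰_k))`. -/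
def HasStrongRankNDiagonal (X : Type u) [TopologicalSpace X] (n : ℕ) : Prop :=
  ∃ 𝒰 : ℕ → Set (Set X), (∀ k, IsOpenCover (𝒰 k)) ∧
    ∀ x y : X, x ≠ y → ∃ k, y ∉ closure (stn n {x} (𝒰 k))

/- Auxiliary lemmas -/

lemma isOpen_st {X : Type u} [TopologicalSpace X] {𝒰 : Set (Set X)}
    (h : ∀ U ∈ 𝒰, IsOpen U) (A : Set X) : IsOpen (st A 𝒰) :=
  isOpen_sUnion fun _ hU => h _ hU.1

lemma mem_st {X : Type u} {𝒰 : Set (Set X)} {A U : Set X} {d : X}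
    (hU : U ∈ 𝒰) (hdU : d ∈ U) (hne : (U ∩ A).Nonempty) : d ∈ st A 𝒰 :=
  ⟨U, ⟨hU, hne⟩, hdU⟩

lemma subset_st {X : Type u} {𝒰 : Set (Set X)} (hcov : ⋃₀ 𝒰 = Set.univ)
    (A : Set X) : A ⊆ st A 𝒰 := by
  intro a ha
  have : a ∈ ⋃₀ 𝒰 := hcov ▸ Set.mem_univ a
  obtain ⟨U, hU, haU⟩ := this
  exact mem_st hU haU ⟨a, haU, ha⟩

lemma stn_two {X : Type u} (A : Set X) (𝒰 : Set (Set X)) :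
    stn 2 A 𝒰 = st (st A 𝒰) 𝒰 := rfl

/-- Every open cover has a subfamily of size at most `weakLindelof X` with dense union. -/
lemma exists_subcover_weakLindelof (X : Type u) [TopologicalSpace X]
    {𝒲 : Set (Set X)} (h𝒲 : IsOpenCover 𝒲) :
    ∃ 𝒱 ⊆ 𝒲, Cardinal.mk ↥𝒱 ≤ weakLindelof X ∧ Dense (⋃₀ 𝒱) := by
  set S : Set Cardinal.{u} := {κ | ∀ 𝒰 : Set (Set X), IsOpenCover 𝒰 →
    ∃ 𝒱 ⊆ 𝒰, Cardinal.mk ↥𝒱 ≤ κ ∧ Dense (⋃₀ 𝒱)} with hS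
  have hne : S.Nonempty := by
    refine ⟨Cardinal.mk (Set X), fun 𝒰 h𝒰 => ⟨𝒰, Set.Subset.rfl, Cardinal.mk_set_le 𝒰, ?_⟩⟩
    rw [h𝒰.2]; exact dense_univ
  have hmem : sInf S ∈ S := csInf_mem hne
  obtain ⟨𝒱, h1, h2, h3⟩ := hmem 𝒲 h𝒲
  exact ⟨𝒱, h1, h2.trans le_sup_right, h3⟩

/-- if `X` is a Hausdorff Baire space with a rank 2-diagonal, then
`|X| ≤ wL(X)^ω`. -/
theorem card_le_weakLindelof_pow_aleph0_of_baire_rank2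
    (X : Type u) [TopologicalSpace X] [T2Space X] [BaireSpace X]
    (h : HasRankNDiagonal X 2) :
    Cardinal.mk X ≤ weakLindelof X ^ Cardinal.aleph0 := by
  classical
  obtain ⟨𝒰, hcov, hsep⟩ := h
  set κ := weakLindelof X with hκ
  -- choose the subfamilies 𝒱 n
  have h𝒱 : ∀ n : ℕ, ∃ 𝒱 ⊆ 𝒰 n, Cardinal.mk ↥𝒱 ≤ κ ∧ Dense (⋃₀ 𝒱) :=
    fun n => exists_subcover_weakLindelof X (hcov n)
  choose 𝒱 h𝒱sub h𝒱card h𝒱dense using h𝒱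
  -- the dense Gδ
  have hDopen : ∀ n, IsOpen (⋃₀ 𝒱 n) :=
    fun n => isOpen_sUnion fun U hU => (hcov n).1 U (h𝒱sub n hU)
  have hD : Dense (⋂ n, ⋃₀ 𝒱 n) := dense_iInter_of_isOpen hDopen h𝒱dense
  -- pick d x n ∈ D ∩ St(x, 𝒰 n)
  have hpick : ∀ (x : X) (n : ℕ), ∃ d ∈ ⋂ m, ⋃₀ 𝒱 m, d ∈ st {x} (𝒰 n) := by
    intro x n
    have hxst : x ∈ st {x} (𝒰 n) := subset_st (hcov n).2 {x} rfl
    exact hD.exists_mem_open (isOpen_st (hcov n).1 _) ⟨x, hxst⟩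
  choose d hdD hdSt using hpick
  -- pick V x n m ∈ 𝒱 m containing d x n
  have hpickV : ∀ (x : X) (n m : ℕ), ∃ V ∈ 𝒱 m, d x n ∈ V := by
    intro x n m
    have := Set.mem_iInter.1 (hdD x n) m
    obtain ⟨V, hV, hdV⟩ := this
    exact ⟨V, hV, hdV⟩
  choose V hV hdV using hpickV
  -- the coding map
  set Φ : X → ℕ → ∀ m : ℕ, ↥(𝒱 m) := fun x n m => ⟨V x n m, hV x n m⟩ with hΦ
  have hinj : Function.Injective Φ := by
    intro x y hxy
    by_contra hne
    obtain ⟨n, hn⟩ := hsep x y hne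
    -- first: d x n = d y n
    have hd : d x n = d y n := by
      by_contra hdne
      obtain ⟨m, hm⟩ := hsep (d x n) (d y n) hdne
      have hVeq : V x n m = V y n m := congrArg Subtype.val (congrFun (congrFun hxy n) m)
      have h1 : d y n ∈ st {d x n} (𝒰 m) := by
        refine mem_st (h𝒱sub m (hV x n m)) (hVeq ▸ hdV y n m) ⟨d x n, hdV x n m, rfl⟩
      have h2 : d y n ∈ stn 2 {d x n} (𝒰 m) := by
        rw [stn_two]
        exact subset_st (hcov m).2 _ h1
      exact hm h2
    -- d y n ∈ st {y} (𝒰 n) gives a W ∈ 𝒰 n with y ∈ W and d y n ∈ W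
    obtain ⟨W, ⟨hW, hWy⟩, hdW⟩ := hdSt y n
    have hyW : y ∈ W := by
      obtain ⟨z, hzW, hz⟩ := hWy
      rw [Set.mem_singleton_iff] at hz
      exact hz ▸ hzW
    have : y ∈ stn 2 {x} (𝒰 n) := by
      rw [stn_two]
      exact mem_st hW hyW ⟨d y n, hdW, hd ▸ hdSt x n⟩
    exact hn this
  -- cardinality computation
  have hcard1 : Cardinal.mk X ≤ Cardinal.mk (ℕ → ∀ m : ℕ, ↥(𝒱 m)) :=
    Cardinal.mk_le_of_injective hinj
  have hT : Cardinal.mk (∀ m : ℕ, ↥(𝒱 m)) ≤ κ ^ Cardinal.aleph0 := by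
    rw [Cardinal.mk_pi]
    calc Cardinal.prod (fun m => Cardinal.mk ↥(𝒱 m))
        ≤ Cardinal.prod (fun _ : ℕ => κ) := Cardinal.prod_le_prod _ _ h𝒱card
      _ = κ ^ Cardinal.aleph0 := by
          simp [Cardinal.prod_const, Cardinal.lift_uzero, Cardinal.mk_nat, Cardinal.lift_aleph0]
  have harrow : Cardinal.mk (ℕ → ∀ m : ℕ, ↥(𝒱 m))
      ≤ (κ ^ Cardinal.aleph0) ^ Cardinal.aleph0 := by
    simp only [Cardinal.mk_arrow, Cardinal.lift_uzero, Cardinal.mk_nat, Cardinal.lift_aleph0]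
    exact Cardinal.power_le_power_right hT
  calc Cardinal.mk X ≤ (κ ^ Cardinal.aleph0) ^ Cardinal.aleph0 := hcard1.trans harrow
    _ = κ ^ (Cardinal.aleph0 * Cardinal.aleph0) := by rw [Cardinal.power_mul]
    _ = κ ^ Cardinal.aleph0 := by rw [Cardinal.aleph0_mul_aleph0]

end DiagonalPaper
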